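/- arXiv:2502.18589 — 2 statements merged into one kernel-verified Lean document; each statement's English description precedes it below -/
import Mathlib

section
/- Let Y(x) = α₂ xⁿ² / ((α₂ + β₂) xⁿ² + K₂ⁿ² β₂) be the nullcline of f. If the parameters satisfy the condition α₁ − β₁ · Y(1)ⁿ¹ / (K₁ⁿ¹ + Y(1)ⁿ¹) ≤ 0, then there exists x₀ ∈ [0,1] such that g(x₀, Y(x₀)) = 0; consequently (x₀, Y(x₀)) is an equilibrium point of the CDK1–APC model in the unit square. -/
/-- Let `Y` be the nullcline of `f`. If the parameters satisfy
`α₁ − β₁ · Y(1)ⁿ¹ / (K₁ⁿ¹ + Y(1)ⁿ¹) ≤ 0`, then there exists `x₀ ∈ [0,1]` with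
`g(x₀, Y(x₀)) = 0`; consequently `(x₀, Y(x₀))` is an equilibrium point of the
CDK1–APC model in the unit square. -/
theorem cdk1_apc_equilibrium_existence
    (α₁ α₂ α₃ β₁ β₂ K₁ K₂ K₃ : ℝ) (n₁ n₂ n₃ : ℕ)
    (hα₁ : 0 < α₁) (hα₂ : 0 < α₂) (hα₃ : 0 < α₃)
    (hβ₁ : 0 < β₁) (hβ₂ : 0 < β₂)
    (hK₁ : 0 < K₁) (hK₂ : 0 < K₂) (hK₃ : 0 < K₃)
    (hn₁ : 0 < n₁) (hn₂ : 0 < n₂) (hn₃ : 0 < n₃)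
    (g f : ℝ → ℝ → ℝ)
    (hg : ∀ x y, g x y =
      α₁ - β₁ * x * (y ^ n₁ / (K₁ ^ n₁ + y ^ n₁))
        + α₃ * (1 - x) * (x ^ n₃ / (K₃ ^ n₃ + x ^ n₃)))
    (hf : ∀ x y, f x y =
      α₂ * (1 - y) * (x ^ n₂ / (K₂ ^ n₂ + x ^ n₂)) - β₂ * y)
    (Y : ℝ → ℝ)
    (hY : ∀ x, Y x = α₂ * x ^ n₂ / ((α₂ + β₂) * x ^ n₂ + K₂ ^ n₂ * β₂))
    (hcond : α₁ - β₁ * ((Y 1) ^ n₁ / (K₁ ^ n₁ + (Y 1) ^ n₁)) ≤ 0) :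
    ∃ x₀ ∈ Set.Icc (0:ℝ) 1,
      g x₀ (Y x₀) = 0 ∧ f x₀ (Y x₀) = 0 ∧
      (x₀, Y x₀) ∈ Set.Icc (0:ℝ) 1 ×ˢ Set.Icc (0:ℝ) 1 := by
  -- denominator of Y is positive on [0,1]
  have hD : ∀ x ∈ Set.Icc (0:ℝ) 1,
      0 < (α₂ + β₂) * x ^ n₂ + K₂ ^ n₂ * β₂ := by
    intro x hx
    have : 0 ≤ (α₂ + β₂) * x ^ n₂ :=
      mul_nonneg (by linarith) (pow_nonneg hx.1 _)
    nlinarith [pow_pos hK₂ n₂]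
  have hYnonneg : ∀ x ∈ Set.Icc (0:ℝ) 1, 0 ≤ Y x := by
    intro x hx
    rw [hY]
    exact div_nonneg (mul_nonneg hα₂.le (pow_nonneg hx.1 _)) (hD x hx).le
  have hYle : ∀ x ∈ Set.Icc (0:ℝ) 1, Y x ≤ 1 := by
    intro x hx
    rw [hY]
    rw [div_le_one (hD x hx)]
    nlinarith [pow_nonneg hx.1 n₂, pow_pos hK₂ n₂]
  -- h = g ∘ (x, Y x) is continuous on [0,1]
  set h : ℝ → ℝ := fun x => g x (Y x) with hh
  have hcontY : ContinuousOn Y (Set.Icc (0:ℝ) 1) := by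
    have : ContinuousOn (fun x : ℝ => α₂ * x ^ n₂ / ((α₂ + β₂) * x ^ n₂ + K₂ ^ n₂ * β₂))
        (Set.Icc (0:ℝ) 1) := by
      apply ContinuousOn.div
      · fun_prop
      · fun_prop
      · intro x hx; exact (hD x hx).ne'
    exact this.congr fun x _ => hY x
  have hcont : ContinuousOn h (Set.Icc (0:ℝ) 1) := by
    have : ContinuousOn (fun x : ℝ =>
        α₁ - β₁ * x * ((Y x) ^ n₁ / (K₁ ^ n₁ + (Y x) ^ n₁))
          + α₃ * (1 - x) * (x ^ n₃ / (K₃ ^ n₃ + x ^ n₃))) (Set.Icc (0:ℝ) 1) := by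
      apply ContinuousOn.add
      · apply ContinuousOn.sub continuousOn_const
        apply ContinuousOn.mul (by fun_prop)
        apply ContinuousOn.div (hcontY.pow _)
        · exact continuousOn_const.add (hcontY.pow _)
        · intro x hx
          have := pow_nonneg (hYnonneg x hx) n₁
          have := pow_pos hK₁ n₁
          positivity
      · apply ContinuousOn.mul (by fun_prop)
        apply ContinuousOn.div (by fun_prop) (by fun_prop)
        intro x hx
        have := pow_nonneg hx.1 n₃
        have := pow_pos hK₃ n₃
        positivity
    exact this.congr fun x _ => hg x (Y x)
  -- endpoint values
  have h0 : h 0 = α₁ := by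
    simp only [hh, hg, hY]
    rw [zero_pow hn₂.ne', zero_pow hn₃.ne']
    simp
  have h1 : h 1 ≤ 0 := by
    simp only [hh, hg]
    calc α₁ - β₁ * 1 * ((Y 1) ^ n₁ / (K₁ ^ n₁ + (Y 1) ^ n₁))
          + α₃ * (1 - 1) * (1 ^ n₃ / (K₃ ^ n₃ + 1 ^ n₃))
        = α₁ - β₁ * ((Y 1) ^ n₁ / (K₁ ^ n₁ + (Y 1) ^ n₁)) := by ring
      _ ≤ 0 := hcond
  -- intermediate value theorem
  have hsub : Set.Icc (h 1) (h 0) ⊆ h '' Set.Icc (0:ℝ) 1 :=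
    intermediate_value_Icc' (by norm_num) hcont
  obtain ⟨x₀, hx₀, hx₀0⟩ := hsub ⟨h1, by rw [h0]; exact hα₁.le⟩
  refine ⟨x₀, hx₀, hx₀0, ?_, ?_⟩
  · -- f vanishes on the nullcline
    rw [hf, hY]
    have hD0 := hD x₀ hx₀
    have hK2 : (0:ℝ) < K₂ ^ n₂ + x₀ ^ n₂ := by
      have := pow_nonneg hx₀.1 n₂
      have := pow_pos hK₂ n₂
      positivity
    rw [one_sub_div hD0.ne']
    field_simp
    ring
  · exact ⟨hx₀, hYnonneg x₀ hx₀, hYle x₀ hx₀⟩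
end

section
/- Let α₁, α₂, α₃, β₂ > 0 and suppose 0 < K₁ < α₂/(α₂ + β₂). The function y(x) = (1/(α₂ + β₂)) · (α₂ − (α₂ − (α₂ + β₂)K₁) · ((α₁ + α₃ − α₃ x)/α₁)^{(α₂+β₂)/α₃}) satisfies y(1) = K₁, solves dy/dx = (α₂ − (α₂ + β₂) y)/(α₁ + α₃ − α₃ x) on every interval where α₁ + α₃ − α₃ x > 0, and vanishes at x̂ = 1 + α₁/α₃ − (α₁/α₃) · (α₂/(α₂ − K₁(α₂ + β₂)))^{α₃/(α₂+β₂)}, i.e., y(x̂) = 0. -/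
open Real

/-- Let `α₁, α₂, α₃, β₂ > 0` and `0 < K₁ < α₂/(α₂ + β₂)`.
The function
`y(x) = (1/(α₂ + β₂)) · (α₂ − (α₂ − (α₂ + β₂)K₁) · ((α₁ + α₃ − α₃ x)/α₁)^((α₂+β₂)/α₃))`
satisfies `y(1) = K₁`, solves `dy/dx = (α₂ − (α₂ + β₂) y)/(α₁ + α₃ − α₃ x)` on
every interval where `α₁ + α₃ − α₃ x > 0`, and vanishes at
`x̂ = 1 + α₁/α₃ − (α₁/α₃) · (α₂/(α₂ − K₁(α₂ + β₂)))^(α₃/(α₂+β₂))`,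
i.e. `y(x̂) = 0`. -/
theorem region2_trajectory_through_one_K1
    (α₁ α₂ α₃ β₂ K₁ : ℝ)
    (hα₁ : 0 < α₁) (hα₂ : 0 < α₂) (hα₃ : 0 < α₃) (hβ₂ : 0 < β₂)
    (hK₁ : 0 < K₁) (hK₁' : K₁ < α₂ / (α₂ + β₂))
    (y : ℝ → ℝ)
    (hy : ∀ x, y x = (1 / (α₂ + β₂)) *
      (α₂ - (α₂ - (α₂ + β₂) * K₁) * ((α₁ + α₃ - α₃ * x) / α₁) ^ ((α₂ + β₂) / α₃)))
    (xhat : ℝ)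
    (hxhat : xhat = 1 + α₁ / α₃ -
      (α₁ / α₃) * (α₂ / (α₂ - K₁ * (α₂ + β₂))) ^ (α₃ / (α₂ + β₂))) :
    y 1 = K₁ ∧
    (∀ x : ℝ, 0 < α₁ + α₃ - α₃ * x →
      HasDerivAt y ((α₂ - (α₂ + β₂) * y x) / (α₁ + α₃ - α₃ * x)) x) ∧
    y xhat = 0 := by
  have hs : 0 < α₂ + β₂ := by linarith
  have hA : 0 < α₂ - (α₂ + β₂) * K₁ := by
    have := (lt_div_iff₀ hs).mp hK₁'
    nlinarith
  set p : ℝ := (α₂ + β₂) / α₃ with hp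
  have hpne : p ≠ 0 := by positivity
  refine ⟨?_, ?_, ?_⟩
  · rw [hy 1]
    have : (α₁ + α₃ - α₃ * 1) / α₁ = 1 := by field_simp; ring
    rw [this, Real.one_rpow]
    field_simp
    ring
  · intro x hx
    have hu : (0:ℝ) < (α₁ + α₃ - α₃ * x) / α₁ := div_pos hx hα₁
    have h1 : HasDerivAt (fun x : ℝ => α₁ + α₃ - α₃ * x) (-α₃) x := by
      simpa using ((hasDerivAt_id x).const_mul α₃).const_sub (α₁ + α₃)
    have h2 : HasDerivAt (fun x : ℝ => (α₁ + α₃ - α₃ * x) / α₁) (-α₃ / α₁) x :=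
      h1.div_const α₁
    have h3 := (h2.rpow_const (p := p) (Or.inl (ne_of_gt hu)))
    have h4 := ((h3.const_mul (α₂ - (α₂ + β₂) * K₁)).const_sub α₂).const_mul
      (1 / (α₂ + β₂))
    have hyfun : y = fun x => (1 / (α₂ + β₂)) *
        (α₂ - (α₂ - (α₂ + β₂) * K₁) * ((α₁ + α₃ - α₃ * x) / α₁) ^ p) :=
      funext hy
    have hxne : α₁ + α₃ - α₃ * x ≠ 0 := ne_of_gt hx
    have hL : α₂ - (α₂ + β₂) * y x
        = (α₂ - (α₂ + β₂) * K₁) * ((α₁ + α₃ - α₃ * x) / α₁) ^ p := by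
      rw [hy x]; field_simp; ring
    rw [hL, hyfun]
    convert h4 using 1
    case e'_4 => rfl
    case e'_5 => rfl
    have hup : ((α₁ + α₃ - α₃ * x) / α₁) ^ p
        = ((α₁ + α₃ - α₃ * x) / α₁) ^ (p - 1) * ((α₁ + α₃ - α₃ * x) / α₁) := by
      rw [← Real.rpow_add_one (ne_of_gt hu) (p - 1)]
      norm_num
    have hup' : ((α₁ + α₃ - α₃ * x) / α₁) ^ (p - 1)
        = ((α₁ + α₃ - α₃ * x) / α₁) ^ p * (α₁ / (α₁ + α₃ - α₃ * x)) := by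
      rw [hup]; field_simp
    rw [hup']
    generalize ((α₁ + α₃ - α₃ * x) / α₁) ^ p = t
    rw [hp]
    field_simp
  · rw [hy xhat, hxhat]
    have harg : α₁ + α₃ - α₃ * (1 + α₁ / α₃ -
        (α₁ / α₃) * (α₂ / (α₂ - K₁ * (α₂ + β₂))) ^ (α₃ / (α₂ + β₂)))
        = α₁ * (α₂ / (α₂ - K₁ * (α₂ + β₂))) ^ (α₃ / (α₂ + β₂)) := by
      field_simp
      ring
    rw [harg]
    have hb : (0:ℝ) < α₂ / (α₂ - K₁ * (α₂ + β₂)) := by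
      apply div_pos hα₂; nlinarith
    have : α₁ * (α₂ / (α₂ - K₁ * (α₂ + β₂))) ^ (α₃ / (α₂ + β₂)) / α₁
        = (α₂ / (α₂ - K₁ * (α₂ + β₂))) ^ (α₃ / (α₂ + β₂)) := by
      field_simp
    rw [this, ← Real.rpow_mul (le_of_lt hb)]
    have hexp : α₃ / (α₂ + β₂) * ((α₂ + β₂) / α₃) = 1 := by
      field_simp
    rw [hexp, Real.rpow_one]
    have hA' : α₂ - K₁ * (α₂ + β₂) ≠ 0 := by nlinarith
    field_simp
    ring
end
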